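/- For the step-function pair correlation g₂(r) = Θ(r−1), the structure factor S(k) = 1 − φ 2^{3ν} Γ(1+ν) J_ν(k)/k^ν (ν = d/2) is nonnegative for all k > 0 whenever φ ≤ 1/2^d, since 2^ν Γ(1+ν) J_ν(k)/k^ν ≤ 1 for all k > 0. -/

import Mathlib

/-!
Poisson's integral. Writing each coefficient `1 / Γ(ν + m + 1)` of the power series of
`Γ(ν + 1) (2 / k)^ν J_ν(k)` as a Beta integral `B(m + 1/2, ν + 1/2) / (Γ(m + 1/2) Γ(ν + 1/2))` and
using `m! Γ(m + 1/2) = (2m)! √π / 4^m`, the series sums under the integral sign to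
`∫₀¹ cos (k √u) u^(-1/2) (1 - u)^(ν - 1/2) du / B(1/2, ν + 1/2)`,
the mean of a cosine against a probability density on `[0, 1]`, hence at most `1` when
`ν > -1/2`. Since `2^(3ν) = 2^d 2^ν` and `φ 2^d ≤ 1`, the structure factor is nonnegative.
-/

open Real

/-- The Bessel function of the first kind of order `ν`, defined for `x > 0` by its
power series `J_ν(x) = (x/2)^ν ∑_{m≥0} (-1)^m / (m! Γ(ν+m+1)) (x/2)^{2m}`. -/
noncomputable def besselJ (ν x : ℝ) : ℝ :=
  (x / 2) ^ ν *
    ∑' m : ℕ, (-1 : ℝ) ^ m / (m.factorial * Real.Gamma (ν + m + 1)) * (x / 2) ^ (2 * m)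

open MeasureTheory Set

noncomputable def betaKernel (a b u : ℝ) : ℝ := u ^ (a - 1) * (1 - u) ^ (b - 1)

lemma betaKernel_nonneg (a b : ℝ) {u : ℝ} (hu : u ∈ Icc (0 : ℝ) 1) : 0 ≤ betaKernel a b u :=
  mul_nonneg (rpow_nonneg hu.1 _) (rpow_nonneg (sub_nonneg.2 hu.2) _)

lemma pow_mul_betaKernel (m : ℕ) (a b : ℝ) {u : ℝ} (hu : 0 < u) :
    u ^ m * betaKernel a b u = betaKernel (a + m) b u := by
  rw [betaKernel, betaKernel, ← mul_assoc, add_sub_right_comm, rpow_add hu, rpow_natCast,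
    mul_comm (u ^ m)]

lemma ofReal_betaKernel (a b : ℝ) {u : ℝ} (hu : u ∈ Icc (0 : ℝ) 1) :
    (betaKernel a b u : ℂ) = (u : ℂ) ^ ((a : ℂ) - 1) * (1 - (u : ℂ)) ^ ((b : ℂ) - 1) := by
  rw [betaKernel, Complex.ofReal_mul, Complex.ofReal_cpow hu.1,
    Complex.ofReal_cpow (sub_nonneg.2 hu.2)]
  push_cast
  rfl

lemma intervalIntegrable_betaKernel {a b : ℝ} (ha : 0 < a) (hb : 0 < b) :
    IntervalIntegrable (betaKernel a b) volume 0 1 := by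
  have h := Complex.betaIntegral_convergent (u := a) (v := b) (by simpa) (by simpa)
  refine (intervalIntegrable_iff.2 (intervalIntegrable_iff.1 h).re).congr fun u hu => ?_
  rw [uIoc_of_le zero_le_one] at hu
  simp only [← ofReal_betaKernel a b (Ioc_subset_Icc_self hu), RCLike.re_to_complex,
    Complex.ofReal_re]

lemma integral_betaKernel {a b : ℝ} (ha : 0 < a) (hb : 0 < b) :
    ∫ u in (0 : ℝ)..1, betaKernel a b u = Gamma a * Gamma b / Gamma (a + b) := by
  have h := Complex.betaIntegral_eq_Gamma_mul_div a b (by simpa) (by simpa)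
  rw [Complex.betaIntegral] at h
  apply Complex.ofReal_injective
  rw [← intervalIntegral.integral_ofReal,
    intervalIntegral.integral_congr fun u hu => ofReal_betaKernel a b ?_, h]
  · push_cast [← Complex.Gamma_ofReal]
    rfl
  · rwa [uIcc_of_le zero_le_one] at hu

lemma Real.Gamma_nat_add_half_eq_factorial (m : ℕ) :
    Gamma (m + 1 / 2) = (2 * m).factorial * √π / (4 ^ m * m.factorial) := by
  have h := Gamma_mul_Gamma_add_half ((m : ℝ) + 1 / 2)
  rw [show (m : ℝ) + 1 / 2 + 1 / 2 = m + 1 by ring, Gamma_nat_eq_factorial,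
    show 2 * ((m : ℝ) + 1 / 2) = ((2 * m : ℕ) : ℝ) + 1 by push_cast; ring, Gamma_nat_eq_factorial,
    show (1 : ℝ) - (((2 * m : ℕ) : ℝ) + 1) = -((2 * m : ℕ) : ℝ) by ring,
    rpow_neg zero_le_two, rpow_natCast, pow_mul] at h
  rw [eq_div_iff (by positivity), mul_left_comm, h]
  norm_num
  field_simp

lemma integral_pow_mul_betaKernel (m : ℕ) {a b : ℝ} (ha : 0 < a) (hb : 0 < b) :
    ∫ u in (0 : ℝ)..1, u ^ m * betaKernel a b u =
      Gamma (a + m) * Gamma b / Gamma (a + m + b) := by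
  rw [← integral_betaKernel (by positivity) hb]
  refine intervalIntegral.integral_congr_ae (Filter.Eventually.of_forall fun u hu => ?_)
  rw [uIoc_of_le zero_le_one] at hu
  exact pow_mul_betaKernel m a b hu.1

noncomputable def besselJSeries (ν x : ℝ) : ℝ :=
  ∑' m : ℕ, (-1 : ℝ) ^ m / (m.factorial * Gamma (ν + m + 1)) * (x / 2) ^ (2 * m)

lemma besselJ_eq_rpow_mul_besselJSeries (ν x : ℝ) :
    besselJ ν x = (x / 2) ^ ν * besselJSeries ν x :=
  rfl

lemma cos_coeff_mul_integral_pow_mul_betaKernel {ν : ℝ} (hν : -1 / 2 < ν) (x : ℝ) (m : ℕ) :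
    (-1) ^ m * x ^ (2 * m) / (2 * m).factorial *
        ∫ u in (0 : ℝ)..1, u ^ m * betaKernel (1 / 2) (ν + 1 / 2) u =
      √π * Gamma (ν + 1 / 2) *
        ((-1 : ℝ) ^ m / (m.factorial * Gamma (ν + m + 1)) * (x / 2) ^ (2 * m)) := by
  rw [integral_pow_mul_betaKernel m one_half_pos (by linarith), add_comm (1 / 2 : ℝ),
    Gamma_nat_add_half_eq_factorial, show (m : ℝ) + 1 / 2 + (ν + 1 / 2) = ν + m + 1 by ring]
  have : 0 < Gamma (ν + m + 1) := Gamma_pos_of_pos (by linarith [m.cast_nonneg (α := ℝ)])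
  rw [div_pow, pow_mul 2]
  field_simp
  ring

theorem sqrt_pi_mul_Gamma_mul_besselJSeries {ν : ℝ} (hν : -1 / 2 < ν) (x : ℝ) :
    √π * Gamma (ν + 1 / 2) * besselJSeries ν x =
      ∫ u in (0 : ℝ)..1, cos (x * √u) * betaKernel (1 / 2) (ν + 1 / 2) u := by
  set K := betaKernel (1 / 2) (ν + 1 / 2)
  have hK : IntervalIntegrable K volume 0 1 :=
    intervalIntegrable_betaKernel one_half_pos (by linarith)
  have hsum := intervalIntegral.hasSum_integral_of_dominated_convergence
    (μ := volume) (a := 0) (b := 1) (f := fun u => cos (x * √u) * K u)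
    (F := fun m u => (-1) ^ m * x ^ (2 * m) / (2 * m).factorial * (u ^ m * K u))
    (fun m u => |x| ^ (2 * m) / (2 * m).factorial * K u) ?meas ?bound ?summable ?integrable ?lim
  · simp only [K, intervalIntegral.integral_const_mul,
      cos_coeff_mul_integral_pow_mul_betaKernel hν] at hsum
    rw [besselJSeries, ← tsum_mul_left, hsum.tsum_eq]
  case meas =>
    exact fun m => (intervalIntegrable_iff.1
      ((hK.continuousOn_mul (continuousOn_pow m)).const_mul _)).aestronglyMeasurable
  case bound =>
    refine fun m => Filter.Eventually.of_forall fun u hu => ?_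
    rw [uIoc_of_le zero_le_one] at hu
    have hK0 : 0 ≤ K u := betaKernel_nonneg _ _ (Ioc_subset_Icc_self hu)
    simp only [norm_mul, norm_div, norm_pow, norm_neg, norm_one, one_pow, one_mul,
      Real.norm_eq_abs, Nat.abs_cast, abs_of_nonneg hu.1.le, abs_of_nonneg hK0]
    gcongr
    exact mul_le_of_le_one_left hK0 (pow_le_one₀ hu.1.le hu.2)
  case summable =>
    have := (summable_pow_div_factorial |x|).comp_injective (mul_right_injective₀ two_ne_zero)
    exact Filter.Eventually.of_forall fun u _ => this.mul_right (K u)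
  case integrable =>
    simp_rw [tsum_mul_right]
    exact hK.const_mul _
  case lim =>
    refine Filter.Eventually.of_forall fun u hu => ?_
    rw [uIoc_of_le zero_le_one] at hu
    refine ((hasSum_cos (x * √u)).mul_right (K u)).congr_fun fun m => ?_
    rw [mul_pow, pow_mul √u, sq_sqrt hu.1.le]
    ring

theorem Gamma_mul_besselJSeries_le_one {ν : ℝ} (hν : -1 / 2 < ν) (x : ℝ) :
    Gamma (ν + 1) * besselJSeries ν x ≤ 1 := by
  have hK := intervalIntegrable_betaKernel one_half_pos (by linarith : 0 < ν + 1 / 2)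
  have hc : 0 < √π * Gamma (ν + 1 / 2) :=
    mul_pos (sqrt_pos.2 pi_pos) (Gamma_pos_of_pos (by linarith))
  have hΓ : 0 < Gamma (ν + 1) := Gamma_pos_of_pos (by linarith)
  have hle :
      √π * Gamma (ν + 1 / 2) * besselJSeries ν x ≤ √π * Gamma (ν + 1 / 2) / Gamma (ν + 1) := by
    rw [sqrt_pi_mul_Gamma_mul_besselJSeries hν]
    calc ∫ u in (0 : ℝ)..1, cos (x * √u) * betaKernel (1 / 2) (ν + 1 / 2) u
        ≤ ∫ u in (0 : ℝ)..1, betaKernel (1 / 2) (ν + 1 / 2) u :=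
          intervalIntegral.integral_mono_on zero_le_one (hK.continuousOn_mul (by fun_prop)) hK
            fun u hu => mul_le_of_le_one_left (betaKernel_nonneg _ _ hu) (cos_le_one _)
      _ = √π * Gamma (ν + 1 / 2) / Gamma (ν + 1) := by
          rw [integral_betaKernel one_half_pos (by linarith), Gamma_one_half_eq]
          ring_nf
  rw [le_div_iff₀ hΓ, mul_assoc, mul_comm (besselJSeries ν x)] at hle
  exact le_of_mul_le_mul_left (by linarith) hc

theorem two_rpow_mul_Gamma_mul_besselJ_div_rpow_le_one {ν : ℝ} (hν : -1 / 2 < ν) {k : ℝ}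
    (hk : 0 < k) : (2 : ℝ) ^ ν * Gamma (1 + ν) * besselJ ν k / k ^ ν ≤ 1 := by
  have hkν : 0 < k ^ ν := rpow_pos_of_pos hk ν
  have h2ν : (0 : ℝ) < 2 ^ ν := rpow_pos_of_pos two_pos ν
  have : (2 : ℝ) ^ ν * Gamma (1 + ν) * besselJ ν k / k ^ ν =
      Gamma (ν + 1) * besselJSeries ν k := by
    rw [besselJ_eq_rpow_mul_besselJSeries, div_rpow hk.le zero_le_two, add_comm 1 ν]
    field_simp
  exact this ▸ Gamma_mul_besselJSeries_le_one hν k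

theorem step_function_structure_factor_nonneg_general (d : ℕ)
    (ν : ℝ) (hν : ν = d / 2) :
    (∀ k : ℝ, 0 < k →
        (2 : ℝ) ^ ν * Real.Gamma (1 + ν) * besselJ ν k / k ^ ν ≤ 1) ∧
      ∀ φ : ℝ, 0 ≤ φ → φ ≤ 1 / 2 ^ d → ∀ k : ℝ, 0 < k →
        0 ≤ 1 - φ * (2 : ℝ) ^ (3 * ν) * Real.Gamma (1 + ν) * besselJ ν k / k ^ ν := by
  have hν' : -1 / 2 < ν := by rw [hν]; linarith [d.cast_nonneg (α := ℝ)]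
  have hbound k (hk : 0 < k) := two_rpow_mul_Gamma_mul_besselJ_div_rpow_le_one hν' hk
  refine ⟨hbound, fun φ hφ₀ hφ k hk => ?_⟩
  have h2d : (2 : ℝ) ^ (3 * ν) = 2 ^ d * 2 ^ ν := by
    rw [show 3 * ν = d + ν by rw [hν]; ring, rpow_add two_pos, rpow_natCast]
  have hφd : φ * 2 ^ d ≤ 1 := by rwa [le_div_iff₀ (by positivity)] at hφ
  rw [sub_nonneg]
  calc φ * (2 : ℝ) ^ (3 * ν) * Gamma (1 + ν) * besselJ ν k / k ^ ν
      = φ * 2 ^ d * ((2 : ℝ) ^ ν * Gamma (1 + ν) * besselJ ν k / k ^ ν) := by rw [h2d]; ring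
    _ ≤ φ * 2 ^ d * 1 := by gcongr; exact hbound k hk
    _ ≤ 1 := by linarith

/-- For the step-function pair correlation `g₂(r) = Θ(r-1)`, the structure factor
`S(k) = 1 - φ 2^{3ν} Γ(1+ν) J_ν(k)/k^ν` (with `ν = d/2`) is nonnegative for all
`k > 0` whenever `0 ≤ φ ≤ 1/2^d`, since `2^ν Γ(1+ν) J_ν(k)/k^ν ≤ 1` for all `k > 0`. -/
theorem step_function_structure_factor_nonneg (d : ℕ) (hd : 1 ≤ d)
    (ν : ℝ) (hν : ν = d / 2) :
    (∀ k : ℝ, 0 < k →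
        (2 : ℝ) ^ ν * Real.Gamma (1 + ν) * besselJ ν k / k ^ ν ≤ 1) ∧
      ∀ φ : ℝ, 0 ≤ φ → φ ≤ 1 / 2 ^ d → ∀ k : ℝ, 0 < k →
        0 ≤ 1 - φ * (2 : ℝ) ^ (3 * ν) * Real.Gamma (1 + ν) * besselJ ν k / k ^ ν :=
  step_function_structure_factor_nonneg_general d ν hν
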